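/- Let 0 ≤ ρ₂ < ρ₁ ≤ π, let γ be a closed curve on S² whose radius of curvature satisfies ρ₂ < ρ(t) < ρ₁ for all t, and let θ ∈ [ρ₁ − π, ρ₂]. Then the radius of curvature ρ̄ of the translated curve γ_θ(t) = cos θ · γ(t) + sin θ · n(t) satisfies ρ̄(t) = ρ(t) − θ for every t; equivalently, the geodesic curvature of γ_θ at γ_θ(t) equals cot(ρ(t) − θ). -/

import Mathlib

noncomputable section

open Real Set Filter
open scoped RealInnerProductSpace

abbrev E3 := EuclideanSpace ℝ (Fin 3)

/-- The cross product on `ℝ³`. -/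
def cross3 (u v : E3) : E3 :=
  (WithLp.equiv 2 (Fin 3 → ℝ)).symm
    ![u 1 * v 2 - u 2 * v 1, u 2 * v 0 - u 0 * v 2, u 0 * v 1 - u 1 * v 0]

/-- Unit tangent vector of a curve. -/
def unitTan (γ : ℝ → E3) (t : ℝ) : E3 := ‖deriv γ t‖⁻¹ • deriv γ t

/-- Unit normal vector of a spherical curve. -/
def unitNor (γ : ℝ → E3) (t : ℝ) : E3 := cross3 (γ t) (unitTan γ t)

/-- Geodesic curvature of a spherical curve. -/
def geodCurv (γ : ℝ → E3) (t : ℝ) : ℝ :=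
  ⟪deriv (unitTan γ) t, unitNor γ t⟫ / ‖deriv γ t‖

/-- Radius of curvature: `arccot` of the geodesic curvature, valued in `(0, π)`. -/
def radCurv (γ : ℝ → E3) (t : ℝ) : ℝ := π / 2 - arctan (geodCurv γ t)

/-- A closed curve on the sphere `S²`: a `C²`, 1-periodic, regular map into the unit sphere. -/
def IsClosedCurve (γ : ℝ → E3) : Prop :=
  ContDiff ℝ 2 γ ∧ Function.Periodic γ 1 ∧ ∀ t, ‖γ t‖ = 1 ∧ deriv γ t ≠ 0

/-- Homotopy of closed spherical curves through closed curves whose radius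
of curvature takes values in `(ρ₂, ρ₁)`. -/
def HomotopicIn (ρ₂ ρ₁ : ℝ) (γ₀ γ₁ : ℝ → E3) : Prop :=
  ∃ H : ℝ → ℝ → E3,
    H 0 = γ₀ ∧ H 1 = γ₁ ∧
    (∀ s ∈ Icc (0:ℝ) 1, IsClosedCurve (H s) ∧ ∀ t, radCurv (H s) t ∈ Ioo ρ₂ ρ₁) ∧
    ContinuousOn (fun p : ℝ × ℝ => H p.1 p.2) (Icc 0 1 ×ˢ univ) ∧
    ContinuousOn (fun p : ℝ × ℝ => deriv (H p.1) p.2) (Icc 0 1 ×ˢ univ) ∧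
    ContinuousOn (fun p : ℝ × ℝ => deriv (deriv (H p.1)) p.2) (Icc 0 1 ×ˢ univ)

/-- `σ` is a circle traversed `k` times with radius of curvature `α`. -/
def IsCircleTraversed (k : ℕ) (α : ℝ) (σ : ℝ → E3) : Prop :=
  α ∈ Ioo (0:ℝ) π ∧
  ∃ R : Matrix (Fin 3) (Fin 3) ℝ, R.transpose * R = 1 ∧ R.det = 1 ∧
    ∀ t, σ t = (WithLp.equiv 2 (Fin 3 → ℝ)).symm
      (R.mulVec ![sin α * cos (2 * π * k * t), sin α * sin (2 * π * k * t), cos α])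

/-- Caustic band / translation formula. -/
def caustic (γ : ℝ → E3) (t θ : ℝ) : E3 :=
  Real.cos θ • γ t + Real.sin θ • unitNor γ t

/-! With `v = ‖γ'‖`, unit tangent `t`, normal `n = γ × t` and `κ = cot ρ`, differentiating
`‖γ‖ = ‖t‖ = 1` and `⟪γ, t⟫ = 0` gives `⟪t, t'⟫ = 0` and `⟪γ, t'⟫ = -v`, hence
`n' = γ × t' = -κ v t`. So `γ_θ' = v (cos θ - κ sin θ) t` with
`cos θ - κ sin θ = sin (ρ - θ) / sin ρ > 0`: the translated curve has the same unit tangent `t`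
and unit normal `cos θ n - sin θ γ`, and its geodesic curvature is
`(κ cos θ + sin θ) / (cos θ - κ sin θ) = cot (ρ - θ)`. -/

open Matrix

lemma cross3_eq_crossProduct (u v : E3) : cross3 u v = WithLp.toLp 2 (u.ofLp ⨯₃ v.ofLp) := rfl

lemma inner_eq_ofLp_dotProduct (u v : E3) : ⟪u, v⟫ = u.ofLp ⬝ᵥ v.ofLp := by
  rw [EuclideanSpace.inner_eq_star_dotProduct, star_trivial, dotProduct_comm]

def cross3Bilin : E3 →L[ℝ] E3 →L[ℝ] E3 :=
  (((crossProduct (R := ℝ)).compl₁₂ (WithLp.linearEquiv 2 ℝ (Fin 3 → ℝ)).toLinearMap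
    (WithLp.linearEquiv 2 ℝ (Fin 3 → ℝ)).toLinearMap).compr₂
    (WithLp.linearEquiv 2 ℝ (Fin 3 → ℝ)).symm.toLinearMap).toContinuousBilinearMap

lemma HasDerivAt.cross3 {f g : ℝ → E3} {f' g' : E3} {x : ℝ} (hf : HasDerivAt f f' x)
    (hg : HasDerivAt g g' x) :
    HasDerivAt (fun s => cross3 (f s) (g s)) (cross3 (f x) g' + cross3 f' (g x)) x :=
  cross3Bilin.hasDerivAt_of_bilinear (fun _ => hf) (fun _ => hg)

lemma cross3_add_left (u v w : E3) : cross3 (u + v) w = cross3 u w + cross3 v w := by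
  simp [cross3_eq_crossProduct]

lemma cross3_smul_left (c : ℝ) (u v : E3) : cross3 (c • u) v = c • cross3 u v := by
  simp [cross3_eq_crossProduct]

lemma cross3_self (u : E3) : cross3 u u = 0 := by
  simp [cross3_eq_crossProduct]

lemma cross3_cross3_right (u v : E3) : cross3 (cross3 u v) v = ⟪u, v⟫ • v - ⟪v, v⟫ • u := by
  simp only [cross3_eq_crossProduct, cross_cross_eq_smul_sub_smul, inner_eq_ofLp_dotProduct]
  rfl

lemma cross3_eq_neg_inner_smul {g w T : E3} (hT : ⟪T, T⟫ = 1) (hgT : ⟪g, T⟫ = 0)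
    (hwT : ⟪w, T⟫ = 0) : cross3 g w = -⟪w, cross3 g T⟫ • T := by
  simp only [inner_eq_ofLp_dotProduct, cross3_eq_crossProduct, cross_apply, vec3_dotProduct] at *
  obtain ⟨g⟩ := g; obtain ⟨w⟩ := w; obtain ⟨T⟩ := T
  ext i
  fin_cases i <;> simp only [Fin.zero_eta, Fin.mk_one, Fin.reduceFinMk, Fin.isValue, cons_val,
    cons_val_zero, cons_val_one, PiLp.smul_apply, smul_eq_mul]
  · linear_combination (w 1 * g 2 - g 1 * w 2) * hT + (T 1 * w 2 - T 2 * w 1) * hgT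
      - (T 1 * g 2 - T 2 * g 1) * hwT
  · linear_combination (w 2 * g 0 - g 2 * w 0) * hT + (T 2 * w 0 - T 0 * w 2) * hgT
      - (T 2 * g 0 - T 0 * g 2) * hwT
  · linear_combination (w 0 * g 1 - g 0 * w 1) * hT + (T 0 * w 1 - T 1 * w 0) * hgT
      - (T 0 * g 1 - T 1 * g 0) * hwT

lemma inner_add_inner_eq_zero_of_inner_eq_const {F : Type*} [NormedAddCommGroup F]
    [InnerProductSpace ℝ F] {f g : ℝ → F} {f' g' : F} {c x : ℝ} (hf : HasDerivAt f f' x)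
    (hg : HasDerivAt g g' x) (hfg : ∀ t, ⟪f t, g t⟫ = c) : ⟪f x, g'⟫ + ⟪f', g x⟫ = 0 :=
  (hf.inner ℝ hg).unique (by rw [funext hfg]; exact hasDerivAt_const x c)

namespace Real

lemma cot_pi_div_two_sub_arctan (x : ℝ) : cot (π / 2 - arctan x) = x := by
  rw [cot_eq_cos_div_sin, cos_pi_div_two_sub, sin_pi_div_two_sub, ← tan_eq_sin_div_cos,
    tan_arctan]

lemma pi_div_two_sub_arctan_cot {x : ℝ} (hx : x ∈ Ioo 0 π) : π / 2 - arctan (cot x) = x := by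
  have hcot : cot x = tan (π / 2 - x) := by
    rw [cot_eq_cos_div_sin, tan_eq_sin_div_cos, sin_pi_div_two_sub, cos_pi_div_two_sub]
  rw [hcot, arctan_tan (by linarith [hx.2]) (by linarith [hx.1])]
  ring

lemma cot_sub_eq_div {ρ : ℝ} (hρ : sin ρ ≠ 0) (θ : ℝ) :
    cot (ρ - θ) = (cot ρ * cos θ + sin θ) / (cos θ - cot ρ * sin θ) := by
  rw [← mul_div_mul_right _ _ hρ, cot_eq_cos_div_sin, cot_eq_cos_div_sin, cos_sub, sin_sub]
  congr 1 <;> field_simp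

lemma cos_sub_cot_mul_sin_pos {ρ θ : ℝ} (hρ : ρ ∈ Ioo 0 π) (hρθ : ρ - θ ∈ Ioo 0 π) :
    0 < cos θ - cot ρ * sin θ := by
  have hsin : 0 < sin ρ := sin_pos_of_mem_Ioo hρ
  have hquot : cos θ - cot ρ * sin θ = sin (ρ - θ) / sin ρ := by
    rw [cot_eq_cos_div_sin, sin_sub]
    field_simp
  rw [hquot]
  exact div_pos (sin_pos_of_mem_Ioo hρθ) hsin

end Real

lemma radCurv_mem_Ioo (γ : ℝ → E3) (t : ℝ) : radCurv γ t ∈ Ioo 0 π := by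
  constructor <;> unfold radCurv <;>
    linarith [arctan_lt_pi_div_two (geodCurv γ t), neg_pi_div_two_lt_arctan (geodCurv γ t)]

lemma geodCurv_eq_cot_radCurv (γ : ℝ → E3) (t : ℝ) : geodCurv γ t = cot (radCurv γ t) :=
  (cot_pi_div_two_sub_arctan _).symm

section SphericalCurve

variable {γ : ℝ → E3}

lemma deriv_eq_norm_smul_unitTan (γ : ℝ → E3) (t : ℝ) :
    deriv γ t = ‖deriv γ t‖ • unitTan γ t := by
  rcases eq_or_ne (deriv γ t) 0 with h | h
  · simp [unitTan, h]
  · rw [unitTan, smul_inv_smul₀ (norm_ne_zero_iff.mpr h)]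

lemma norm_unitTan {t : ℝ} (hreg : deriv γ t ≠ 0) : ‖unitTan γ t‖ = 1 :=
  norm_smul_inv_norm hreg

lemma inner_unitTan_self {t : ℝ} (hreg : deriv γ t ≠ 0) : ⟪unitTan γ t, unitTan γ t⟫ = 1 := by
  rw [real_inner_self_eq_norm_sq, norm_unitTan hreg, one_pow]

lemma hasDerivAt_of_contDiff_two (hγ : ContDiff ℝ 2 γ) (t : ℝ) : HasDerivAt γ (deriv γ t) t :=
  (hγ.differentiable (by norm_num) t).hasDerivAt

lemma hasDerivAt_unitTan (hγ : ContDiff ℝ 2 γ) {t : ℝ} (hreg : deriv γ t ≠ 0) :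
    HasDerivAt (unitTan γ) (deriv (unitTan γ) t) t := by
  have hd : Differentiable ℝ (deriv γ) := (hγ.deriv' (n := 1)).differentiable one_ne_zero
  exact ((((hd t).norm ℝ hreg).inv (norm_ne_zero_iff.mpr hreg)).smul (hd t)).hasDerivAt

lemma inner_self_unitTan (hγ : ContDiff ℝ 2 γ) (hsph : ∀ t, ‖γ t‖ = 1) (t : ℝ) :
    ⟪γ t, unitTan γ t⟫ = 0 := by
  have hγγ : ∀ s, ⟪γ s, γ s⟫ = 1 := fun s => by rw [real_inner_self_eq_norm_sq, hsph s, one_pow]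
  have h := inner_add_inner_eq_zero_of_inner_eq_const (hasDerivAt_of_contDiff_two hγ t)
    (hasDerivAt_of_contDiff_two hγ t) hγγ
  rw [real_inner_comm (γ t) (deriv γ t)] at h
  rw [unitTan, real_inner_smul_right, (by linarith : ⟪γ t, deriv γ t⟫ = 0), mul_zero]

lemma inner_unitTan_deriv_unitTan (hγ : ContDiff ℝ 2 γ) (hreg : ∀ t, deriv γ t ≠ 0) (t : ℝ) :
    ⟪unitTan γ t, deriv (unitTan γ) t⟫ = 0 := by
  have h := inner_add_inner_eq_zero_of_inner_eq_const (hasDerivAt_unitTan hγ (hreg t))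
    (hasDerivAt_unitTan hγ (hreg t)) fun s => inner_unitTan_self (hreg s)
  rw [real_inner_comm (unitTan γ t)] at h
  linarith

lemma inner_self_deriv_unitTan (hγ : ContDiff ℝ 2 γ) (hsph : ∀ t, ‖γ t‖ = 1)
    (hreg : ∀ t, deriv γ t ≠ 0) (t : ℝ) : ⟪γ t, deriv (unitTan γ) t⟫ = -‖deriv γ t‖ := by
  have h := inner_add_inner_eq_zero_of_inner_eq_const (hasDerivAt_of_contDiff_two hγ t)
    (hasDerivAt_unitTan hγ (hreg t)) (inner_self_unitTan hγ hsph)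
  rw [deriv_eq_norm_smul_unitTan γ t, real_inner_smul_left, inner_unitTan_self (hreg t),
    mul_one] at h
  linarith

lemma inner_deriv_unitTan_unitNor {t : ℝ} (hreg : deriv γ t ≠ 0) :
    ⟪deriv (unitTan γ) t, unitNor γ t⟫ = geodCurv γ t * ‖deriv γ t‖ :=
  (div_mul_cancel₀ _ (norm_ne_zero_iff.mpr hreg)).symm

lemma hasDerivAt_unitNor (hγ : ContDiff ℝ 2 γ) (hsph : ∀ t, ‖γ t‖ = 1)
    (hreg : ∀ t, deriv γ t ≠ 0) (t : ℝ) :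
    HasDerivAt (unitNor γ) (-(geodCurv γ t * ‖deriv γ t‖) • unitTan γ t) t := by
  have hN := (hasDerivAt_of_contDiff_two hγ t).cross3 (hasDerivAt_unitTan hγ (hreg t))
  have hT'T : ⟪deriv (unitTan γ) t, unitTan γ t⟫ = 0 := by
    rw [real_inner_comm]; exact inner_unitTan_deriv_unitTan hγ hreg t
  rw [deriv_eq_norm_smul_unitTan γ t, cross3_smul_left, cross3_self, smul_zero, add_zero,
    cross3_eq_neg_inner_smul (inner_unitTan_self (hreg t)) (inner_self_unitTan hγ hsph t) hT'T]
    at hN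
  rwa [← inner_deriv_unitTan_unitNor (hreg t)]

lemma hasDerivAt_caustic (hγ : ContDiff ℝ 2 γ) (hsph : ∀ t, ‖γ t‖ = 1)
    (hreg : ∀ t, deriv γ t ≠ 0) (θ t : ℝ) :
    HasDerivAt (fun t' => caustic γ t' θ)
      ((‖deriv γ t‖ * (cos θ - geodCurv γ t * sin θ)) • unitTan γ t) t := by
  refine (((hasDerivAt_of_contDiff_two hγ t).const_smul (cos θ)).add
    ((hasDerivAt_unitNor hγ hsph hreg t).const_smul (sin θ))).congr_deriv ?_
  have hd := deriv_eq_norm_smul_unitTan γ t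
  set v := ‖deriv γ t‖
  rw [hd]
  module

lemma unitTan_caustic (hγ : ContDiff ℝ 2 γ) (hsph : ∀ t, ‖γ t‖ = 1)
    (hreg : ∀ t, deriv γ t ≠ 0) {θ : ℝ} (hθ : ∀ t, 0 < cos θ - geodCurv γ t * sin θ) :
    unitTan (fun t' => caustic γ t' θ) = unitTan γ := by
  funext t
  have hspeed : 0 < ‖deriv γ t‖ * (cos θ - geodCurv γ t * sin θ) :=
    mul_pos (norm_pos_iff.mpr (hreg t)) (hθ t)
  rw [unitTan, (hasDerivAt_caustic hγ hsph hreg θ t).deriv, norm_smul, norm_unitTan (hreg t),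
    mul_one, Real.norm_of_nonneg hspeed.le, inv_smul_smul₀ hspeed.ne']

lemma unitNor_caustic (hγ : ContDiff ℝ 2 γ) (hsph : ∀ t, ‖γ t‖ = 1)
    (hreg : ∀ t, deriv γ t ≠ 0) {θ : ℝ} (hθ : ∀ t, 0 < cos θ - geodCurv γ t * sin θ) (t : ℝ) :
    unitNor (fun t' => caustic γ t' θ) t = cos θ • unitNor γ t - sin θ • γ t := by
  rw [unitNor, unitTan_caustic hγ hsph hreg hθ, caustic, unitNor, cross3_add_left,
    cross3_smul_left, cross3_smul_left, cross3_cross3_right, inner_self_unitTan hγ hsph,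
    inner_unitTan_self (hreg t)]
  module

lemma geodCurv_caustic (hγ : ContDiff ℝ 2 γ) (hsph : ∀ t, ‖γ t‖ = 1)
    (hreg : ∀ t, deriv γ t ≠ 0) {θ : ℝ} (hθ : ∀ t, 0 < cos θ - geodCurv γ t * sin θ) (t : ℝ) :
    geodCurv (fun t' => caustic γ t' θ) t
      = (geodCurv γ t * cos θ + sin θ) / (cos θ - geodCurv γ t * sin θ) := by
  have hspeed : 0 < ‖deriv γ t‖ * (cos θ - geodCurv γ t * sin θ) :=
    mul_pos (norm_pos_iff.mpr (hreg t)) (hθ t)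
  rw [geodCurv, unitTan_caustic hγ hsph hreg hθ, unitNor_caustic hγ hsph hreg hθ,
    (hasDerivAt_caustic hγ hsph hreg θ t).deriv, norm_smul, norm_unitTan (hreg t), mul_one,
    Real.norm_of_nonneg hspeed.le, inner_sub_right, real_inner_smul_right, real_inner_smul_right,
    inner_deriv_unitTan_unitNor (hreg t), real_inner_comm, inner_self_deriv_unitTan hγ hsph hreg,
    div_eq_div_iff hspeed.ne' (hθ t).ne']
  ring

lemma geodCurv_caustic_eq_cot (hγ : ContDiff ℝ 2 γ) (hsph : ∀ t, ‖γ t‖ = 1)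
    (hreg : ∀ t, deriv γ t ≠ 0) {θ : ℝ} (hθ : ∀ t, radCurv γ t - θ ∈ Ioo 0 π) (t : ℝ) :
    geodCurv (fun t' => caustic γ t' θ) t = cot (radCurv γ t - θ) := by
  have hpos : ∀ s, 0 < cos θ - geodCurv γ s * sin θ := fun s => by
    rw [geodCurv_eq_cot_radCurv]
    exact cos_sub_cot_mul_sin_pos (radCurv_mem_Ioo γ s) (hθ s)
  rw [geodCurv_caustic hγ hsph hreg hpos, geodCurv_eq_cot_radCurv γ t,
    cot_sub_eq_div (sin_pos_of_mem_Ioo (radCurv_mem_Ioo γ t)).ne']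

lemma radCurv_caustic (hγ : ContDiff ℝ 2 γ) (hsph : ∀ t, ‖γ t‖ = 1)
    (hreg : ∀ t, deriv γ t ≠ 0) {θ : ℝ} (hθ : ∀ t, radCurv γ t - θ ∈ Ioo 0 π) (t : ℝ) :
    radCurv (fun t' => caustic γ t' θ) t = radCurv γ t - θ := by
  rw [radCurv, geodCurv_caustic_eq_cot hγ hsph hreg hθ, pi_div_two_sub_arctan_cot (hθ t)]

end SphericalCurve

theorem translation_radius_of_curvature_general (ρ₂ ρ₁ θ : ℝ) (γ : ℝ → E3) (hγ : IsClosedCurve γ)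
    (hrad : ∀ t, radCurv γ t ∈ Ioo ρ₂ ρ₁) (hθ : θ ∈ Icc (ρ₁ - π) ρ₂) :
    ∀ t, radCurv (fun t' => caustic γ t' θ) t = radCurv γ t - θ ∧
      geodCurv (fun t' => caustic γ t' θ) t = Real.cot (radCurv γ t - θ) := by
  obtain ⟨hC2, -, hsph_reg⟩ := hγ
  have hsph t := (hsph_reg t).1
  have hreg t := (hsph_reg t).2
  have hshift : ∀ t, radCurv γ t - θ ∈ Ioo 0 π := fun t =>
    ⟨by linarith [(hrad t).1, hθ.2], by linarith [(hrad t).2, hθ.1]⟩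
  exact fun t => ⟨radCurv_caustic hC2 hsph hreg hshift t,
    geodCurv_caustic_eq_cot hC2 hsph hreg hshift t⟩

/-- The radius of curvature of the translated curve
`γ_θ = cos θ · γ + sin θ · n` equals `ρ(t) − θ`; equivalently, its geodesic curvature equals
`cot (ρ(t) − θ)`. -/
theorem translation_radius_of_curvature (ρ₂ ρ₁ θ : ℝ) (hρ₂ : 0 ≤ ρ₂) (hρ : ρ₂ < ρ₁)
    (hρ₁ : ρ₁ ≤ π) (γ : ℝ → E3) (hγ : IsClosedCurve γ)
    (hrad : ∀ t, radCurv γ t ∈ Ioo ρ₂ ρ₁) (hθ : θ ∈ Icc (ρ₁ - π) ρ₂) :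
    ∀ t, radCurv (fun t' => caustic γ t' θ) t = radCurv γ t - θ ∧
      geodCurv (fun t' => caustic γ t' θ) t = Real.cot (radCurv γ t - θ) :=
  translation_radius_of_curvature_general ρ₂ ρ₁ θ γ hγ hrad hθ
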